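/- arXiv:2202.01424 — 2 statements merged into one kernel-verified Lean document; each statement's English description precedes it below -/
import Mathlib

section
/- The function N₂(z) = z·cos(√|z|) is a Nussbaum function: sup over k>k₀ of (1/(k−k₀))∫_{k₀}^{k} N₂(τ)dτ = +∞ and the corresponding infimum is −∞. -/
/-!
Substituting `τ = s²` turns `∫ τ cos √τ dτ` into `∫ 2 s³ cos s ds`, whose primitive is
`G s = 2 (s³ sin s + 3 s² cos s - 6 s sin s - 6 cos s)`. Hence for `k ≥ 0` the integral of
`N₂` over `[k₀, k]` is `G √k` plus a constant. At the points `s` where `cos s = 0`, `sin s = ±1`,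
which occur for arbitrarily large `s`, `G s = ±2 (s³ - 6 s)`, so at `k = s²` the integral is
`±2 s³ + O(s)` while `k - k₀ = O(s²)`: the averages are unbounded in both directions.
-/

open Real Filter intervalIntegral

theorem Function.Periodic.frequently_atTop_eq {α : Type*} {f : ℝ → α} {p : ℝ}
    (hf : f.Periodic p) (hp : 0 < p) (x : ℝ) : ∃ᶠ t in atTop, f t = f x := by
  refine frequently_atTop.2 fun a => ?_
  obtain ⟨n, hn⟩ := exists_nat_ge ((a - x) / p)
  refine ⟨x + n * p, ?_, (hf.nat_mul n) x⟩
  rw [div_le_iff₀ hp] at hn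
  linarith

theorem eventually_lt_mul_cube {d : ℝ} (hd : 0 < d) (a b c : ℝ) :
    ∀ᶠ s in atTop, a * s ^ 2 + b * s + c < d * s ^ 3 := by
  filter_upwards [eventually_ge_atTop (1 + (|a| + |b| + |c|) / d)] with s hs
  have hs1 : 1 ≤ s := by linarith [show 0 ≤ (|a| + |b| + |c|) / d by positivity]
  have hds : d + |a| + |b| + |c| ≤ d * s := by
    linarith [(div_le_iff₀ hd).1 (show (|a| + |b| + |c|) / d ≤ s - 1 by linarith)]
  have hsq : s ≤ s ^ 2 := by nlinarith
  calc a * s ^ 2 + b * s + c ≤ |a| * s ^ 2 + |b| * s ^ 2 + |c| * s ^ 2 := by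
        gcongr ?_ + ?_ + ?_
        · exact mul_le_mul_of_nonneg_right (le_abs_self a) (sq_nonneg s)
        · nlinarith [le_abs_self b, abs_nonneg b]
        · nlinarith [le_abs_self c, abs_nonneg c]
    _ < (d + |a| + |b| + |c|) * s ^ 2 := by nlinarith
    _ ≤ d * s * s ^ 2 := by gcongr
    _ = d * s ^ 3 := by ring

noncomputable def cubeCosPrimitive (s : ℝ) : ℝ :=
  2 * (s ^ 3 * sin s + 3 * s ^ 2 * cos s - 6 * s * sin s - 6 * cos s)

theorem hasDerivAt_cubeCosPrimitive (s : ℝ) :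
    HasDerivAt cubeCosPrimitive (2 * s ^ 3 * cos s) s := by
  have h := ((((hasDerivAt_pow 3 s).mul (hasDerivAt_sin s)).add
    (((hasDerivAt_pow 2 s).const_mul 3).mul (hasDerivAt_cos s))).sub
    (((hasDerivAt_id s).const_mul 6).mul (hasDerivAt_sin s))).sub
    ((hasDerivAt_cos s).const_mul 6) |>.const_mul 2
  exact h.congr_deriv (by norm_num; ring)

theorem continuous_cubeCosPrimitive : Continuous cubeCosPrimitive :=
  continuous_iff_continuousAt.2 fun s => (hasDerivAt_cubeCosPrimitive s).continuousAt

theorem hasDerivAt_cubeCosPrimitive_sqrt {x : ℝ} (hx : 0 < x) :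
    HasDerivAt (fun x => cubeCosPrimitive √x) (x * cos √x) x := by
  refine ((hasDerivAt_cubeCosPrimitive √x).comp x (hasDerivAt_sqrt hx.ne')).congr_deriv ?_
  have : √x ≠ 0 := (sqrt_pos.2 hx).ne'
  field_simp
  rw [sq_sqrt hx.le, mul_comm]

theorem cubeCosPrimitive_of_cos_eq_zero {s : ℝ} (h : cos s = 0) :
    cubeCosPrimitive s = 2 * sin s * (s ^ 3 - 6 * s) := by
  simp only [cubeCosPrimitive, h]
  ring

theorem exists_integral_eq_cubeCosPrimitive_sqrt_add (k₀ : ℝ) :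
    ∃ C, ∀ k, 0 ≤ k → ∫ τ in k₀..k, τ * cos √|τ| = cubeCosPrimitive √k + C := by
  refine ⟨(∫ τ in k₀..0, τ * cos √|τ|) - cubeCosPrimitive 0, fun k hk => ?_⟩
  have hcont : Continuous fun τ : ℝ => τ * cos √|τ| := by fun_prop
  rw [← integral_add_adjacent_intervals (hcont.intervalIntegrable k₀ 0)
      (hcont.intervalIntegrable 0 k),
    integral_eq_sub_of_hasDerivAt_of_le hk
      (continuous_cubeCosPrimitive.comp continuous_sqrt).continuousOn
      (fun x hx => ?_) (hcont.intervalIntegrable 0 k),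
    Function.comp_apply, Function.comp_apply, sqrt_zero]
  · ring
  · rw [abs_of_pos hx.1]
    exact hasDerivAt_cubeCosPrimitive_sqrt hx.1

theorem stmt_2 (k₀ : ℝ) (M : ℝ) :
    (∃ k > k₀, (1 / (k - k₀)) * ∫ τ in k₀..k, τ * Real.cos (Real.sqrt |τ|) > M) ∧
    (∃ k > k₀, (1 / (k - k₀)) * ∫ τ in k₀..k, τ * Real.cos (Real.sqrt |τ|) < M) := by
  obtain ⟨C, hC⟩ := exists_integral_eq_cubeCosPrimitive_sqrt_add k₀
  have hlarge (a b c : ℝ) :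
      ∀ᶠ s in atTop, 0 ≤ s ∧ k₀ < s ^ 2 ∧ a * s ^ 2 + b * s + c < 2 * s ^ 3 :=
    (eventually_ge_atTop 0).and (((tendsto_pow_atTop two_ne_zero).eventually_gt_atTop k₀).and
      (eventually_lt_mul_cube two_pos a b c))
  constructor
  · obtain ⟨s, hsin, hs0, hk, hcubic⟩ :=
      ((sin_periodic.frequently_atTop_eq two_pi_pos (π / 2)).and_eventually
        (hlarge M 12 (-M * k₀ - C))).exists
    rw [sin_pi_div_two] at hsin
    refine ⟨s ^ 2, hk, ?_⟩
    rw [hC _ (sq_nonneg s), sqrt_sq hs0,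
      cubeCosPrimitive_of_cos_eq_zero (cos_eq_zero_iff_sin_eq.2 (.inl hsin)), hsin, gt_iff_lt,
      one_div, inv_mul_eq_div, lt_div_iff₀ (sub_pos.2 hk)]
    linarith
  · obtain ⟨s, hsin, hs0, hk, hcubic⟩ :=
      ((sin_periodic.frequently_atTop_eq two_pi_pos (-(π / 2))).and_eventually
        (hlarge (-M) 12 (M * k₀ + C))).exists
    rw [sin_neg, sin_pi_div_two] at hsin
    refine ⟨s ^ 2, hk, ?_⟩
    rw [hC _ (sq_nonneg s), sqrt_sq hs0,
      cubeCosPrimitive_of_cos_eq_zero (cos_eq_zero_iff_sin_eq.2 (.inr hsin)), hsin,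
      one_div, inv_mul_eq_div, div_lt_iff₀ (sub_pos.2 hk)]
    linarith
end

section
/- The function N₄(z) = cos(πz/2)·exp(z²) is a Nussbaum function. -/
/-!
Write `N τ = cos (π τ / 2) exp (τ²)`. On the hump `[2j - 1, 2j + 1]` the sign of `N` is `(-1)^j`,
and on its middle half `|N| ≥ exp ((2j - 1/2)²) / 2 ≥ exp (a² + a) / 2` with `a = 2j - 1`. The
integral from `k₀` up to `a` is at most `(a - k₀) exp (a²)` in absolute value, so
`(-1)^j ∫_{k₀}^{a+2} N ≥ exp (a²) (exp a / 2 - (a - k₀))`. Since `exp a` beats every linear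
function, `(-1)^j` times the average of `N` over `[k₀, 2j + 1]` tends to `+∞`; taking `j` even,
resp. odd, makes the average arbitrarily large, resp. arbitrarily negative.
-/

open Real Set Filter MeasureTheory

noncomputable def nussbaumN4 (τ : ℝ) : ℝ := cos (π * τ / 2) * exp (τ ^ 2)

lemma continuous_nussbaumN4 : Continuous nussbaumN4 := by
  unfold nussbaumN4
  fun_prop

lemma abs_nussbaumN4_le (τ : ℝ) : |nussbaumN4 τ| ≤ exp (τ ^ 2) := by
  rw [nussbaumN4, abs_mul, abs_exp]
  exact mul_le_of_le_one_left (exp_nonneg _) (abs_cos_le_one _)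

lemma neg_one_pow_mul_nussbaumN4 (j : ℕ) (τ : ℝ) :
    (-1) ^ j * nussbaumN4 τ = cos (π * (τ - 2 * j) / 2) * exp (τ ^ 2) := by
  have h : π * τ / 2 = π * (τ - 2 * j) / 2 + j * π := by ring
  rw [nussbaumN4, h, cos_add_nat_mul_pi, ← mul_assoc, ← mul_assoc, ← pow_add, ← two_mul,
    pow_mul, neg_one_sq, one_pow, one_mul]

lemma cos_pi_mul_div_two_nonneg {x : ℝ} (hx : x ∈ Icc (-1) 1) : 0 ≤ cos (π * x / 2) :=
  cos_nonneg_of_neg_pi_div_two_le_of_le (by nlinarith [pi_pos, hx.1]) (by nlinarith [pi_pos, hx.2])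

lemma one_half_le_cos_pi_mul_div_two {x : ℝ} (hx : x ∈ Icc (-(1 / 2)) (1 / 2)) :
    1 / 2 ≤ cos (π * x / 2) := by
  have hsq : (π * x / 2) ^ 2 ≤ 1 := (sq_le_one_iff_abs_le_one _).2 <| abs_le.2
    ⟨by nlinarith [pi_pos, pi_lt_four, hx.1], by nlinarith [pi_pos, pi_lt_four, hx.2]⟩
  linarith [one_sub_sq_div_two_le_cos (x := π * x / 2)]

lemma mul_le_integral_of_nonneg_of_le_on {f : ℝ → ℝ} {a b c d m : ℝ} (hab : a ≤ b) (hbc : b ≤ c)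
    (hcd : c ≤ d) (hf : IntervalIntegrable f volume a d) (h₀ : ∀ x ∈ Icc a d, 0 ≤ f x)
    (hm : ∀ x ∈ Icc b c, m ≤ f x) : m * (c - b) ≤ ∫ x in a..d, f x := by
  have hfbc : IntervalIntegrable f volume b c :=
    hf.mono_set (by rw [uIcc_of_le hbc, uIcc_of_le (hab.trans (hbc.trans hcd))]
                    exact Icc_subset_Icc hab hcd)
  calc m * (c - b) = ∫ _ in b..c, m := by rw [intervalIntegral.integral_const, smul_eq_mul, mul_comm]
    _ ≤ ∫ x in b..c, f x := intervalIntegral.integral_mono_on hbc intervalIntegrable_const hfbc hm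
    _ ≤ ∫ x in a..d, f x := intervalIntegral.integral_mono_interval hab hbc hcd
        (ae_restrict_of_forall_mem measurableSet_Ioc fun x hx => h₀ x (Ioc_subset_Icc_self hx)) hf

lemma exp_sq_add_div_two_le_neg_one_pow_mul_integral (j : ℕ) :
    exp ((2 * j - 1) ^ 2 + (2 * j - 1)) / 2 ≤
      (-1) ^ j * ∫ τ in (2 * j - 1 : ℝ)..(2 * j + 1), nussbaumN4 τ := by
  rw [← intervalIntegral.integral_const_mul]
  have hj : (0 : ℝ) ≤ j := j.cast_nonneg
  have := mul_le_integral_of_nonneg_of_le_on (a := 2 * j - 1) (b := 2 * j - 1 / 2)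
    (c := 2 * j + 1 / 2) (d := 2 * j + 1) (m := exp ((2 * j - 1) ^ 2 + (2 * j - 1)) / 2)
    (f := fun τ => (-1) ^ j * nussbaumN4 τ) (by linarith) (by linarith) (by linarith)
    ((continuous_const.mul continuous_nussbaumN4).intervalIntegrable _ _)
    (fun τ hτ => by
      rw [neg_one_pow_mul_nussbaumN4]
      exact mul_nonneg (cos_pi_mul_div_two_nonneg ⟨by linarith [hτ.1], by linarith [hτ.2]⟩)
        (exp_nonneg _))
    (fun τ hτ => by
      have hcos := one_half_le_cos_pi_mul_div_two (x := τ - 2 * j)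
        ⟨by linarith [hτ.1], by linarith [hτ.2]⟩
      have hexp : exp ((2 * j - 1) ^ 2 + (2 * j - 1)) ≤ exp (τ ^ 2) :=
        exp_le_exp.2 (by nlinarith [mul_nonneg (sub_nonneg.2 hτ.1) hj])
      rw [neg_one_pow_mul_nussbaumN4, div_eq_mul_one_div, mul_comm]
      exact mul_le_mul hcos hexp (exp_nonneg _) (one_half_pos.le.trans hcos))
  convert this using 1
  ring

lemma abs_integral_nussbaumN4_le {k₀ a : ℝ} (h : |k₀| ≤ a) :
    |∫ τ in k₀..a, nussbaumN4 τ| ≤ (a - k₀) * exp (a ^ 2) := by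
  have hk₀a : k₀ ≤ a := (le_abs_self k₀).trans h
  have hbound : ∀ τ ∈ uIoc k₀ a, ‖nussbaumN4 τ‖ ≤ exp (a ^ 2) := fun τ hτ => by
    rw [uIoc_of_le hk₀a] at hτ
    have hsq : τ ^ 2 ≤ a ^ 2 := sq_le_sq' (by linarith [neg_abs_le k₀, hτ.1]) hτ.2
    exact (abs_nussbaumN4_le τ).trans (exp_le_exp.2 hsq)
  simpa [abs_of_nonneg (sub_nonneg.2 hk₀a), mul_comm] using
    intervalIntegral.norm_integral_le_of_norm_le_const hbound

lemma exp_sq_mul_le_neg_one_pow_mul_integral {k₀ : ℝ} {j : ℕ} (h : |k₀| ≤ 2 * j - 1) :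
    exp ((2 * j - 1) ^ 2) * (exp (2 * j - 1) / 2 - (2 * j - 1 - k₀)) ≤
      (-1) ^ j * ∫ τ in k₀..(2 * j + 1), nussbaumN4 τ := by
  have hint : ∀ a b : ℝ, IntervalIntegrable nussbaumN4 volume a b :=
    continuous_nussbaumN4.intervalIntegrable
  rw [← intervalIntegral.integral_add_adjacent_intervals (hint k₀ (2 * j - 1)) (hint _ _), mul_add]
  have hprefix := abs_integral_nussbaumN4_le h
  have hsign : |(-1) ^ j * ∫ τ in k₀..(2 * j - 1 : ℝ), nussbaumN4 τ| =
      |∫ τ in k₀..(2 * j - 1 : ℝ), nussbaumN4 τ| := by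
    simp [abs_mul]
  have hhump := exp_sq_add_div_two_le_neg_one_pow_mul_integral j
  rw [exp_add] at hhump
  linarith [neg_abs_le ((-1) ^ j * ∫ τ in k₀..(2 * j - 1 : ℝ), nussbaumN4 τ)]

lemma eventually_mul_add_lt_exp (b c : ℝ) : ∀ᶠ x in atTop, b * x + c < exp x := by
  filter_upwards [(tendsto_exp_div_pow_atTop 1).eventually_gt_atTop (|b| + |c|),
    eventually_ge_atTop 1] with x hx hx₁
  rw [pow_one, lt_div_iff₀ (by linarith)] at hx
  nlinarith [le_abs_self b, le_abs_self c, abs_nonneg c]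

lemma eventually_lt_neg_one_pow_mul_average (k₀ C : ℝ) :
    ∀ᶠ j : ℕ in atTop, k₀ < 2 * j + 1 ∧
      C < (-1) ^ j * ((1 / (2 * j + 1 - k₀)) * ∫ τ in k₀..(2 * j + 1), nussbaumN4 τ) := by
  have hlin : Tendsto (fun j : ℕ => (2 * j - 1 : ℝ)) atTop atTop :=
    tendsto_atTop_add_const_right _ (-1)
      (tendsto_natCast_atTop_atTop.const_mul_atTop two_pos)
  filter_upwards [hlin.eventually_ge_atTop |k₀|,
    hlin.eventually (eventually_mul_add_lt_exp (2 * (|C| + 1)) (2 * (|C| + 1) * (2 - k₀)))]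
    with j hk₀ hexp
  have hk : 0 < 2 * j + 1 - k₀ := by linarith [le_abs_self k₀]
  refine ⟨by linarith, ?_⟩
  have hX : |C| * (2 * j + 1 - k₀) < exp (2 * j - 1) / 2 - (2 * j - 1 - k₀) := by
    linarith
  rw [one_div, mul_left_comm, inv_mul_eq_div, lt_div_iff₀ hk]
  calc C * (2 * j + 1 - k₀) ≤ |C| * (2 * j + 1 - k₀) := by gcongr; exact le_abs_self C
    _ < exp (2 * j - 1) / 2 - (2 * j - 1 - k₀) := hX
    _ ≤ exp ((2 * j - 1) ^ 2) * (exp (2 * j - 1) / 2 - (2 * j - 1 - k₀)) :=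
        le_mul_of_one_le_left ((mul_nonneg (abs_nonneg C) hk.le).trans hX.le)
          (one_le_exp (sq_nonneg _))
    _ ≤ _ := exp_sq_mul_le_neg_one_pow_mul_integral hk₀

theorem stmt_3 (k₀ : ℝ) (M : ℝ) :
    (∃ k > k₀, (1 / (k - k₀)) * ∫ τ in k₀..k, Real.cos (Real.pi * τ / 2) * Real.exp (τ ^ 2) > M) ∧
    (∃ k > k₀, (1 / (k - k₀)) * ∫ τ in k₀..k, Real.cos (Real.pi * τ / 2) * Real.exp (τ ^ 2) < M) := by
  show (∃ k > k₀, (1 / (k - k₀)) * ∫ τ in k₀..k, nussbaumN4 τ > M) ∧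
    (∃ k > k₀, (1 / (k - k₀)) * ∫ τ in k₀..k, nussbaumN4 τ < M)
  obtain ⟨j₀, hj₀⟩ := eventually_atTop.1 <|
    (eventually_lt_neg_one_pow_mul_average k₀ M).and (eventually_lt_neg_one_pow_mul_average k₀ (-M))
  obtain ⟨⟨hk_even, h_even⟩, -⟩ := hj₀ (2 * j₀) (by omega)
  obtain ⟨-, hk_odd, h_odd⟩ := hj₀ (2 * j₀ + 1) (by omega)
  rw [pow_mul, neg_one_sq, one_pow, one_mul] at h_even
  rw [pow_succ, pow_mul, neg_one_sq, one_pow, one_mul, neg_one_mul, neg_lt_neg_iff] at h_odd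
  exact ⟨⟨_, hk_even, h_even⟩, ⟨_, hk_odd, h_odd⟩⟩
end
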